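/- Let H ≥ 1 and K ≥ 1 be integers and let v ∈ 𝒱_{H,K} be an H-achievable vector. Then v k ≥ H for every k ∈ Fin K; moreover, if K ≥ 2 then v k > H for every k ∈ Fin K. -/

import Mathlib

open scoped BigOperators

noncomputable section

def simplexInt (K : ℕ) : Set (Fin K → ℝ) :=
  {r | (∀ k, 0 < r k) ∧ ∑ k, r k = 1}

/-- A vector `v` is `(H'+1)`-achievable if there is a bookmaking strategy `Ψ`
such that every decisive bet sequence yields total payout `v k*` on the last bet `k*`. -/
def Achievable (K H' : ℕ) (v : Fin K → ℝ) : Prop :=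
  ∃ Ψ : (h : Fin (H' + 1)) → (Fin h.val → Fin K) → (Fin K → ℝ),
    (∀ h hist, Ψ h hist ∈ simplexInt K) ∧
    ∀ q : Fin (H' + 1) → Fin K,
      (∑ h : Fin (H' + 1),
        if q h = q (Fin.last H')
        then 1 / Ψ h (fun i => q (Fin.castLE h.isLt.le i)) (q (Fin.last H'))
        else 0) = v (q (Fin.last H'))

/-
Bet on the same outcome `k` at every round: then every round pays out, and `v k` is the
sum of the `H` inverse odds `1 / r_h k`, each at least `1`, and more than `1` as soon as
`r_h` has another positive coordinate.
-/

section Simplex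

variable {K : ℕ} {r : Fin K → ℝ}

lemma one_le_inv_of_mem_simplexInt (hr : r ∈ simplexInt K) (k : Fin K) : 1 ≤ (r k)⁻¹ := by
  obtain ⟨hpos, hsum⟩ := hr
  refine (one_le_inv₀ (hpos k)).2 ?_
  calc r k ≤ ∑ j, r j := Finset.single_le_sum (fun j _ => (hpos j).le) (Finset.mem_univ k)
    _ = 1 := hsum

lemma one_lt_inv_of_mem_simplexInt (hK : 2 ≤ K) (hr : r ∈ simplexInt K) (k : Fin K) :
    1 < (r k)⁻¹ := by
  obtain ⟨hpos, hsum⟩ := hr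
  obtain ⟨j, hjk⟩ : ∃ j, j ≠ k :=
    Fintype.exists_ne_of_one_lt_card (by rw [Fintype.card_fin]; omega) k
  refine (one_lt_inv₀ (hpos k)).2 ?_
  calc r k < ∑ i, r i := Finset.single_lt_sum hjk (Finset.mem_univ k) (Finset.mem_univ j)
        (hpos j) (fun i _ _ => (hpos i).le)
    _ = 1 := hsum

end Simplex

lemma Achievable.exists_eq_sum_inv {K H' : ℕ} {v : Fin K → ℝ} (hv : Achievable K H' v)
    (k : Fin K) :
    ∃ r : Fin (H' + 1) → Fin K → ℝ, (∀ h, r h ∈ simplexInt K) ∧ v k = ∑ h, (r h k)⁻¹ := by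
  obtain ⟨Ψ, hΨ, hpayout⟩ := hv
  refine ⟨fun h => Ψ h fun _ => k, fun h => hΨ h _, ?_⟩
  simpa using (hpayout fun _ => k).symm

theorem achievable_lower_bound (K H' : ℕ) (v : Fin K → ℝ)
    (hv : Achievable K H' v) :
    (∀ k : Fin K, ((H' : ℝ) + 1) ≤ v k) ∧
    (2 ≤ K → ∀ k : Fin K, ((H' : ℝ) + 1) < v k) := by
  have h_card : ((H' : ℝ) + 1) = ∑ _h : Fin (H' + 1), (1 : ℝ) := by simp
  refine ⟨fun k => ?_, fun hK k => ?_⟩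
  all_goals
    obtain ⟨r, hr, hvk⟩ := hv.exists_eq_sum_inv k
    rw [hvk, h_card]
  · exact Finset.sum_le_sum fun h _ => one_le_inv_of_mem_simplexInt (hr h) k
  · exact Finset.sum_lt_sum_of_nonempty Finset.univ_nonempty
      fun h _ => one_lt_inv_of_mem_simplexInt hK (hr h) k
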